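/- Let B_3 be the Borel of GL_3 and χ_1 the character χ_1(diag(a,b,c)) = χ²(a c^{-1}) for an unramified character χ of F^×. Let B_4 be the Borel of GSO_4 and χ_2(diag(abr, ar, a^{-1}, a^{-1}b^{-1})) = χ²(ab)χ(r). Let B be the Borel of G = GSO_10, Q the parabolic with Levi GL_3 × GSO_4, and χ_4 the character of the torus given by χ_4(t) = χ²(a1 a3^{-1} a4) χ(r) for t = diag(r a1, r a2, r a3, r a4, r, 1, a4^{-1}, a3^{-1}, a2^{-1}, a1^{-1}). Then there is a Weyl element w_0 of G (the permutation matrix with ones at positions (1,1),(2,4),(3,8),(4,2),(5,6),(6,5),(7,9),(8,3),(9,7),(10,10)) such that the conjugated character χ_4^{w_0}(t) = χ_4(w_0^{-1} t w_0) equals χ_5 ⊗ χ_6 on the Levi GL_3 × GSO_4 of Q, where χ_5(t) = χ²(a1 a2 a3) and χ_6(t) = χ³(r); consequently Ind_B^G χ_4 δ_B^{1/2} ≅ Ind_Q^G χ_3 δ_Q^{1/2}-type induction, with χ_3((g,h)) = χ²(det g) χ³(λ(h)). -/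
import Mathlib


open Matrix

/-!
The Weyl element `w₀` of `G = GSO₁₀` and the conjugated torus character
(Lemma 2 of the paper).

`G` is the split similitude orthogonal group of the antidiagonal form `J₁₀`.
For an unramified character `χ` of `Fˣ`, the character `χ₄` of the maximal
torus is defined (using triviality on the center) by
`χ₄(u) = χ(u₁ u₃⁻¹ u₄ u₅⁻¹)² · χ(u₅ u₆⁻¹)` on `u = diag(u₁,…,u₁₀)`; on
`t = diag(ra₁, ra₂, ra₃, ra₄, r, 1, a₄⁻¹, a₃⁻¹, a₂⁻¹, a₁⁻¹)` this is
`χ²(a₁a₃⁻¹a₄)χ(r)`.  The claims: (i) the permutation matrix `w₀` with ones at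
positions `(1,1),(2,4),(3,8),(4,2),(5,6),(6,5),(7,9),(8,3),(9,7),(10,10)`
lies in `G` (it is orthogonal for `J₁₀` and has determinant `1`);
(ii) `w₀⁻¹ t w₀ = diag(ra₁, ra₄, a₃⁻¹, ra₂, 1, r, a₂⁻¹, ra₃, a₄⁻¹, a₁⁻¹)`;
(iii) on this conjugated torus element, `χ₄` equals the value of the character
`χ₅ ⊗ χ₆` of the Levi `GL₃ × GSO₄` of `Q`, namely `χ²(a₁a₂a₃) · χ³(r)`
(where `χ₅(t) = χ²(a₁a₂a₃)`, `χ₆(t) = χ³(r)`, matching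
`χ₃((g,h)) = χ²(det g) χ³(λ(h))`).
-/

/-- The antidiagonal form `J₁₀`. -/
def J10 (F : Type*) [Field F] : Matrix (Fin 10) (Fin 10) F :=
  Matrix.of fun i j => if (i : ℕ) + (j : ℕ) = 9 then 1 else 0

/-- The permutation underlying `w₀` (0-indexed; `w₀` has its `1` in row `i` at
column `c i`). -/
def w0perm : Fin 10 → Fin 10 := ![0, 3, 7, 1, 5, 4, 8, 2, 6, 9]

/-- The Weyl element `w₀`. -/
def w0 (F : Type*) [Field F] : Matrix (Fin 10) (Fin 10) F :=
  Matrix.of fun i j => if j = w0perm i then 1 else 0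

/-- `w0perm` as a permutation (it is an involution). -/
def w0equiv : Equiv.Perm (Fin 10) :=
  ⟨w0perm, w0perm, by decide, by decide⟩

lemma w0_eq (F : Type*) [Field F] : w0 F = (w0equiv.permMatrix F) := by
  ext i j
  simp [w0, w0equiv, PEquiv.toMatrix_apply, eq_comm, Equiv.toPEquiv_apply]

lemma w0equiv_symm : w0equiv.symm = w0equiv := by
  ext i; fin_cases i <;> rfl

theorem weyl_element_w0_conjugation
    (F : Type*) [Field F] (M : Type*) [CommGroup M] (χ : Fˣ →* M)
    (a₁ a₂ a₃ a₄ r : Fˣ) :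
    -- (i) w₀ ∈ GSO₁₀ :
    (w0 F)ᵀ * J10 F * w0 F = J10 F ∧ (w0 F).det = 1 ∧
    -- (ii) the conjugation formula  w₀⁻¹ t w₀ = D :
    (w0 F) * Matrix.diagonal
        ![((r * a₁ : Fˣ) : F), ((r * a₄ : Fˣ) : F), ((a₃⁻¹ : Fˣ) : F),
          ((r * a₂ : Fˣ) : F), 1, (r : F), ((a₂⁻¹ : Fˣ) : F),
          ((r * a₃ : Fˣ) : F), ((a₄⁻¹ : Fˣ) : F), ((a₁⁻¹ : Fˣ) : F)] =
      Matrix.diagonal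
        ![((r * a₁ : Fˣ) : F), ((r * a₂ : Fˣ) : F), ((r * a₃ : Fˣ) : F),
          ((r * a₄ : Fˣ) : F), (r : F), 1, ((a₄⁻¹ : Fˣ) : F),
          ((a₃⁻¹ : Fˣ) : F), ((a₂⁻¹ : Fˣ) : F), ((a₁⁻¹ : Fˣ) : F)] * w0 F ∧
    -- (iii) χ₄ on the conjugated torus element equals χ₅ ⊗ χ₆ on t,
    --       i.e. χ₄^{w₀}(t) = χ²(a₁a₂a₃)·χ³(r) :
    χ ((r * a₁) * (a₃⁻¹)⁻¹ * (r * a₂) * 1⁻¹) ^ 2 * χ (1 * r⁻¹) =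
      χ (a₁ * a₂ * a₃) ^ 2 * χ r ^ 3 := by
  have hT : (w0 F)ᵀ = w0 F := by
    rw [w0_eq, ← PEquiv.toMatrix_symm, ← Equiv.toPEquiv_symm, w0equiv_symm]
  refine ⟨?_, ?_, ?_, ?_⟩
  · rw [hT, mul_assoc, w0_eq, PEquiv.mul_toMatrix_toPEquiv,
      PEquiv.toMatrix_toPEquiv_mul]
    ext i j
    simp only [Matrix.submatrix_apply, J10, Matrix.of_apply, id_eq]
    exact if_congr (by revert i j; decide) rfl rfl
  · rw [w0_eq, Matrix.det_permutation]
    norm_num [show Equiv.Perm.sign w0equiv = 1 from by decide]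
  · rw [w0_eq, PEquiv.toMatrix_toPEquiv_mul, PEquiv.mul_toMatrix_toPEquiv]
    ext i j
    simp only [Matrix.submatrix_apply, Matrix.diagonal_apply, id_eq]
    by_cases hij : w0equiv i = j
    · rw [if_pos hij, if_pos ((Equiv.apply_eq_iff_eq_symm_apply _).mp hij)]
      fin_cases i <;> norm_num [w0equiv, w0perm] <;> rfl
    · rw [if_neg hij, if_neg fun h => hij ((Equiv.apply_eq_iff_eq_symm_apply _).mpr h)]
  · have h : (r * a₁) * (a₃⁻¹)⁻¹ * (r * a₂) * 1⁻¹ = (a₁ * a₂ * a₃) * (r * r) := by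
      simp [mul_comm, mul_left_comm, mul_assoc]
    rw [h, one_mul, map_inv]
    simp only [_root_.map_mul, mul_pow]
    group
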